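/- Let G be a finite abstract simplicial complex. For each vertex v let d_j(v) be the number of j-dimensional simplices of G containing v. Then the Levitt curvature K(v) = \sum_{j \ge 0} (-1)^j d_j(v)/(j+1) satisfies \sum_{v \in V} K(v) = \chi(G). -/

import Mathlib

/-!
Expanding `d_j(v)` as a count of simplices, the curvature `K(v)` distributes the weight
`(-1)^(|x|-1)` of each simplex `x ∋ v` equally among the `|x|` vertices of `x`:
`K(v) = ∑_{x ∋ v} (-1)^(|x|-1) / |x|`. Summing over all vertices, every simplex `x` is met
exactly `|x|` times, so it contributes its full weight `(-1)^(|x|-1)` to the total, which is `χ(G)`.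
-/

/-- `G` is a finite abstract simplicial complex: a finite collection of nonempty
finite sets closed under taking nonempty subsets. -/
def IsSimplicialComplex {α : Type*} [DecidableEq α] (G : Finset (Finset α)) : Prop :=
  (∀ x ∈ G, x.Nonempty) ∧ ∀ x ∈ G, ∀ y : Finset α, y ⊆ x → y.Nonempty → y ∈ G

open Finset

theorem Finset.sum_range_card_filter_eq_succ_nsmul {ι M : Type*} [AddCommMonoid M]
    (s : Finset ι) (c : ι → ℕ) (N : ℕ) (hc : ∀ i ∈ s, 0 < c i ∧ c i ≤ N) (f : ℕ → M) :
    ∑ j ∈ range N, #{i ∈ s | c i = j + 1} • f (j + 1) = ∑ i ∈ s, f (c i) := by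
  rw [← sum_fiberwise_of_maps_to (g := fun i => c i - 1) (t := range N)
    fun i hi => mem_range.mpr (by have := hc i hi; omega)]
  refine sum_congr rfl fun j _ => ?_
  have hfiber : {i ∈ s | c i - 1 = j} = {i ∈ s | c i = j + 1} :=
    filter_congr fun i hi => by have := hc i hi; omega
  rw [hfiber, ← sum_const]
  exact sum_congr rfl fun i hi => by rw [(mem_filter.mp hi).2]

theorem Finset.sum_biUnion_sum_filter_mem {α M : Type*} [DecidableEq α] [AddCommMonoid M]
    (G : Finset (Finset α)) (f : Finset α → M) :
    ∑ v ∈ G.biUnion id, ∑ x ∈ G with v ∈ x, f x = ∑ x ∈ G, #x • f x := by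
  rw [sum_comm' (t' := G) (s' := id) fun v x => by
    simp only [mem_filter, mem_biUnion, id]
    exact ⟨fun ⟨_, hx, hv⟩ => ⟨hv, hx⟩, fun ⟨hv, hx⟩ => ⟨⟨x, hx, hv⟩, hx, hv⟩⟩]
  simp only [id, sum_const]

theorem levitt_curvature_eq_sum_simplices {α : Type*} [DecidableEq α]
    (G : Finset (Finset α)) (hG : ∀ x ∈ G, x.Nonempty) (v : α) :
    ∑ j ∈ range (G.sup card),
        (-1 : ℚ) ^ j * #{x ∈ G | v ∈ x ∧ #x = j + 1} / (j + 1) =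
      ∑ x ∈ G with v ∈ x, (-1 : ℚ) ^ (#x - 1) / #x := by
  rw [← sum_range_card_filter_eq_succ_nsmul _ card _
    (fun x hx => ⟨(hG x (mem_filter.mp hx).1).card_pos, le_sup (mem_filter.mp hx).1⟩)
    fun n => (-1 : ℚ) ^ (n - 1) / n]
  refine sum_congr rfl fun j _ => ?_
  rw [filter_filter, nsmul_eq_mul, Nat.add_sub_cancel, Nat.cast_succ]
  ring

/-- Gauss-Bonnet for the Levitt curvature written via the simplex degrees
`d_j(v) = #{x ∈ G : v ∈ x, |x| = j+1}`:  `K(v) = ∑_j (-1)^j d_j(v)/(j+1)`. -/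
theorem gauss_bonnet_levitt_degrees {α : Type*} [DecidableEq α]
    (G : Finset (Finset α)) (hG : IsSimplicialComplex G)
    (V : Finset α) (hV : V = G.biUnion id)
    (d : ℕ → α → ℕ)
    (hd : ∀ j v, d j v = ((G.filter fun x => v ∈ x ∧ x.card = j + 1)).card)
    (K : α → ℚ)
    (hK : ∀ v, K v = ∑ j ∈ Finset.range (G.sup Finset.card),
      ((-1 : ℚ) ^ j) * (d j v) / (j + 1)) :
    ∑ v ∈ V, K v = ∑ x ∈ G, ((-1 : ℚ) ^ (x.card - 1)) := by
  have hK' : ∀ v, K v = ∑ x ∈ G with v ∈ x, (-1 : ℚ) ^ (#x - 1) / #x := fun v => by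
    simp only [hK, hd, levitt_curvature_eq_sum_simplices G hG.1]
  rw [hV, sum_congr rfl fun v _ => hK' v, sum_biUnion_sum_filter_mem]
  refine sum_congr rfl fun x hx => ?_
  have hcard : (#x : ℚ) ≠ 0 := Nat.cast_ne_zero.mpr (hG.1 x hx).card_ne_zero
  rw [nsmul_eq_mul, mul_div_cancel₀ _ hcard]
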